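/- In the setting of the previous theorem, suppose additionally that the cocycle Φ is strongly contracting inside the absorbing set B, i.e., there exist constants α > 0 and C ≥ 1 such that d_X(Φ(t,p,x), Φ(t,p,y)) ≤ C e^{−αt} d_X(x,y) for all x, y ∈ B, p ∈ P, t ≥ 0. Then each fiber of the pullback attractor is a singleton, A_p = {a*(p)}, and the map p ↦ a*(p) is continuous from P to X. -/

import Mathlib

/-!
For `0 ≤ s ≤ t`, the cocycle property and forward invariance of `B` give
`Φ(t, θ_{-t} p, B) ⊆ Φ(s, θ_{-s} p, B)`, and the contraction shrinks the diameter of these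
compact sets like `C e^{-αt} diam B`. Hence `A_p` is the intersection of a nested family of
nonempty compacta with vanishing diameters, a single point `a(p)`. For any `b ∈ B`, the
continuous maps `p ↦ Φ(t, θ_{-t} p, b)` stay within that diameter of `a`, so they converge
to `a` uniformly and `a` is continuous.
-/

open Set Filter Topology Metric

theorem diam_image_le_of_dist_le {X Y : Type*} [PseudoMetricSpace X] [PseudoMetricSpace Y]
    {f : X → Y} {s : Set X} {K : ℝ} (hK : 0 ≤ K) (hs : Bornology.IsBounded s)
    (hf : ∀ x ∈ s, ∀ y ∈ s, dist (f x) (f y) ≤ K * dist x y) :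
    diam (f '' s) ≤ K * diam s :=
  diam_le_of_forall_dist_le (mul_nonneg hK diam_nonneg) <| forall_mem_image.2 fun x hx =>
    forall_mem_image.2 fun y hy =>
      (hf x hx y hy).trans (mul_le_mul_of_nonneg_left (dist_le_diam_of_mem hs hx hy) hK)

theorem tendstoUniformly_of_eventually_dist_le {ι P X : Type*} [PseudoMetricSpace X]
    {l : Filter ι} {F : ι → P → X} {a : P → X} {g : ι → ℝ} (hg : Tendsto g l (𝓝 0))
    (hdist : ∀ᶠ i in l, ∀ p, dist (F i p) (a p) ≤ g i) : TendstoUniformly F a l := by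
  rw [Metric.tendstoUniformly_iff]
  intro ε hε
  filter_upwards [hdist, hg.eventually (gt_mem_nhds hε)] with i hi hgi p
  rw [dist_comm]
  exact (hi p).trans_lt hgi

section NestedFamily

variable {X : Type*} {S : ℝ → Set X}

theorem biInter_closure_biUnion_Ioi_eq [TopologicalSpace X]
    (hS : ∀ ⦃s t⦄, 0 ≤ s → s ≤ t → S t ⊆ S s) (hclosed : ∀ t, 0 ≤ t → IsClosed (S t)) :
    ⋂ τ ∈ Ici (0 : ℝ), closure (⋃ t ∈ Ioi τ, S t) = ⋂ t ∈ Ici (0 : ℝ), S t := by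
  refine subset_antisymm (iInter₂_mono fun τ hτ => ?_) (iInter₂_mono' fun τ hτ => ?_)
  · exact closure_minimal (iUnion₂_subset fun t ht => hS hτ (le_of_lt ht)) (hclosed τ hτ)
  · have hτ' : τ + 1 ∈ Ici (0 : ℝ) := mem_Ici.2 (by linarith [mem_Ici.1 hτ])
    exact ⟨τ + 1, hτ', (subset_biUnion_of_mem (u := S) (mem_Ioi.2 (lt_add_one τ))).trans
      subset_closure⟩

theorem exists_biInter_eq_singleton [MetricSpace X]
    (hS : ∀ ⦃s t⦄, 0 ≤ s → s ≤ t → S t ⊆ S s) (hne : ∀ t, 0 ≤ t → (S t).Nonempty)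
    (hcpt : ∀ t, 0 ≤ t → IsCompact (S t)) (hdiam : Tendsto (fun t => diam (S t)) atTop (𝓝 0)) :
    ∃ a, ⋂ t ∈ Ici (0 : ℝ), S t = {a} := by
  refine exists_eq_singleton_iff_nonempty_subsingleton.2 ⟨?_, fun x hx y hy => ?_⟩
  · rw [biInter_eq_iInter]
    refine IsCompact.nonempty_iInter_of_directed_nonempty_isCompact_isClosed _
      (Antitone.directed_ge fun s t hst => hS s.2 hst) (fun t => hne t t.2)
      (fun t => hcpt t t.2) (fun t => (hcpt t t.2).isClosed)
  · rw [mem_iInter₂] at hx hy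
    refine dist_le_zero.1 (ge_of_tendsto hdiam ?_)
    filter_upwards [eventually_ge_atTop 0] with t ht
    exact dist_le_diam_of_mem (hcpt t ht).isBounded (hx t ht) (hy t ht)

end NestedFamily

section Cocycle

variable {X P : Type*}

def pullbackImage (Φ : ℝ → P → X → X) (θ : ℝ → P → P) (B : Set X) (t : ℝ) (p : P) : Set X :=
  Φ t (θ (-t) p) '' B

theorem pullbackImage_subset {Φ : ℝ → P → X → X} {θ : ℝ → P → P} {B : Set X}
    (hθadd : ∀ s t p, θ (s + t) p = θ s (θ t p))
    (hΦcoc : ∀ τ t : ℝ, 0 ≤ τ → 0 ≤ t → ∀ p x, Φ (τ + t) p x = Φ τ (θ t p) (Φ t p x))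
    (hBinv : ∀ t, 0 ≤ t → ∀ p, Φ t p '' B ⊆ B) {s t : ℝ} (hs : 0 ≤ s) (hst : s ≤ t) (p : P) :
    pullbackImage Φ θ B t p ⊆ pullbackImage Φ θ B s p := by
  have hflow : θ (t - s) (θ (-t) p) = θ (-s) p := by rw [← hθadd]; ring_nf
  have hsplit : Φ t (θ (-t) p) = Φ s (θ (-s) p) ∘ Φ (t - s) (θ (-t) p) := funext fun x => by
    rw [Function.comp_apply, ← hflow, ← hΦcoc s (t - s) hs (sub_nonneg.2 hst), add_sub_cancel]
  rw [pullbackImage, pullbackImage, hsplit, image_comp]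
  exact image_mono (hBinv _ (sub_nonneg.2 hst) _)

end Cocycle

theorem pullback_attractor_singleton_of_contraction_general
    {X P : Type*} [MetricSpace X] [MetricSpace P]
    (Φ : ℝ → P → X → X) (θ : ℝ → P → P)
    (hθadd : ∀ s t p, θ (s + t) p = θ s (θ t p))
    (hθc : ∀ t, Continuous (θ t))
    (hΦc : ∀ t, 0 ≤ t → Continuous (fun q : P × X => Φ t q.1 q.2))
    (hΦcoc : ∀ τ t : ℝ, 0 ≤ τ → 0 ≤ t → ∀ p x, Φ (τ + t) p x = Φ τ (θ t p) (Φ t p x))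
    (B : Set X) (hBne : B.Nonempty) (hBcpt : IsCompact B)
    -- B is forward invariant
    (hBinv : ∀ t, 0 ≤ t → ∀ p, Φ t p '' B ⊆ B)
    -- strong contraction inside B
    (α C : ℝ) (hα : 0 < α) (hC : 1 ≤ C)
    (hcontr : ∀ t, 0 ≤ t → ∀ p, ∀ x ∈ B, ∀ y ∈ B,
      dist (Φ t p x) (Φ t p y) ≤ C * Real.exp (-α * t) * dist x y) :
    ∃ a : P → X, Continuous a ∧
      ∀ p, (⋂ τ ∈ Set.Ici (0:ℝ), closure (⋃ t ∈ Set.Ioi τ, Φ t (θ (-t) p) '' B)) = {a p} := by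
  set S := pullbackImage Φ θ B
  have hsub : ∀ p ⦃s t : ℝ⦄, 0 ≤ s → s ≤ t → S t p ⊆ S s p := fun p _ _ hs hst =>
    pullbackImage_subset hθadd hΦcoc hBinv hs hst p
  have hcpt : ∀ p t, 0 ≤ t → IsCompact (S t p) := fun p t ht =>
    hBcpt.image ((hΦc t ht).comp (Continuous.prodMk_right _))
  have hdiam : ∀ p t, 0 ≤ t → diam (S t p) ≤ C * Real.exp (-α * t) * diam B := fun p t ht =>
    diam_image_le_of_dist_le
      (mul_nonneg (zero_le_one.trans hC) (Real.exp_pos _).le) hBcpt.isBounded (hcontr t ht _)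
  have hdecay : Tendsto (fun t => C * Real.exp (-α * t) * diam B) atTop (𝓝 0) := by
    simpa using ((Real.tendsto_exp_atBot.comp
      (tendsto_id.const_mul_atTop_of_neg (neg_lt_zero.2 hα))).const_mul C).mul_const (diam B)
  have hdiam_zero : ∀ p, Tendsto (fun t => diam (S t p)) atTop (𝓝 0) := fun p =>
    squeeze_zero' (Eventually.of_forall fun _ => diam_nonneg)
      (eventually_ge_atTop 0 |>.mono fun t ht => hdiam p t ht) hdecay
  choose a ha using fun p => exists_biInter_eq_singleton (hsub p)
    (fun t _ => hBne.image _) (hcpt p) (hdiam_zero p)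
  have hmem : ∀ p t, 0 ≤ t → a p ∈ S t p := fun p t ht =>
    mem_iInter₂.1 ((ha p).symm ▸ mem_singleton (a p)) t ht
  obtain ⟨b, hb⟩ := hBne
  have hunif : TendstoUniformly (fun t p => Φ t (θ (-t) p) b) a atTop :=
    tendstoUniformly_of_eventually_dist_le hdecay <| (eventually_ge_atTop 0).mono fun t ht p =>
      (dist_le_diam_of_mem (hcpt p t ht).isBounded (mem_image_of_mem _ hb) (hmem p t ht)).trans
        (hdiam p t ht)
  have hcont : Continuous a := hunif.continuous <| ((eventually_ge_atTop 0).mono fun t ht =>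
    (hΦc t ht).comp ((hθc (-t)).prodMk continuous_const)).frequently
  exact ⟨a, hcont, fun p =>
    (biInter_closure_biUnion_Ioi_eq (hsub p) fun t ht => (hcpt p t ht).isClosed).trans (ha p)⟩

/-- Singleton pullback attractor under strong contraction: if, in addition to the
absorbing-set hypotheses, the cocycle is strongly contracting inside the forward
invariant compact absorbing set `B`, then each fiber
`A_p = ⋂_{τ ≥ 0} closure (⋃_{t > τ} Φ(t, θ_{−t} p, B))` of the pullback attractor is a
singleton `{a*(p)}`, and `p ↦ a*(p)` is continuous. -/
theorem pullback_attractor_singleton_of_contraction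
    {X P : Type*} [MetricSpace X] [CompleteSpace X] [MetricSpace P]
    (Φ : ℝ → P → X → X) (θ : ℝ → P → P)
    (hθ0 : ∀ p, θ 0 p = p) (hθadd : ∀ s t p, θ (s + t) p = θ s (θ t p))
    (hθc : ∀ t, Continuous (θ t))
    (hΦc : ∀ t, 0 ≤ t → Continuous (fun q : P × X => Φ t q.1 q.2))
    (hΦ0 : ∀ p x, Φ 0 p x = x)
    (hΦcoc : ∀ τ t : ℝ, 0 ≤ τ → 0 ≤ t → ∀ p x, Φ (τ + t) p x = Φ τ (θ t p) (Φ t p x))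
    (B : Set X) (hBne : B.Nonempty) (hBcpt : IsCompact B)
    (habs : ∀ D : Set X, D.Nonempty → IsCompact D →
      ∃ T : ℝ, 0 ≤ T ∧ ∀ t, T < t → ∀ p, Φ t p '' D ⊆ B)
    -- B is forward invariant
    (hBinv : ∀ t, 0 ≤ t → ∀ p, Φ t p '' B ⊆ B)
    -- strong contraction inside B
    (α C : ℝ) (hα : 0 < α) (hC : 1 ≤ C)
    (hcontr : ∀ t, 0 ≤ t → ∀ p, ∀ x ∈ B, ∀ y ∈ B,
      dist (Φ t p x) (Φ t p y) ≤ C * Real.exp (-α * t) * dist x y) :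
    ∃ a : P → X, Continuous a ∧
      ∀ p, (⋂ τ ∈ Set.Ici (0:ℝ), closure (⋃ t ∈ Set.Ioi τ, Φ t (θ (-t) p) '' B)) = {a p} :=
  pullback_attractor_singleton_of_contraction_general Φ θ hθadd hθc hΦc hΦcoc B hBne hBcpt hBinv α C
    hα hC hcontr
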